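/- Let I(α) = ∫₀^α (√α/√(α−s)) (1+s²)^{-5/4} ds and J(α) = ∫₀^α (√α/√(α−s)) · s (1+s²)^{-5/4} ds for α > 0, and let c₀ = ∫_{-∞}^{∞} (1+t²)^{-5/4} dt. Then I(α) → c₀/2 and J(α) → 2 as α → ∞. -/

import Mathlib

/-!
Split `∫₀^α` at `α/2`. On `[0, α/2]` the kernel `√α/√(α-s)` is at most `√2` and tends
to `1` pointwise, so dominated convergence gives `∫₀^∞ g`. On `[α/2, α]` the kernel
integrates to `√2 α`, while `|g| = o(1/α)` there as soon as `s g(s) → 0`, so this part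
vanishes. For `g = (1+s²)^{-5/4}` the limit is `c₀/2` by evenness; for `g = s(1+s²)^{-5/4}`
the antiderivative `-2(1+s²)^{-1/4}` gives `2`.
-/

open Real MeasureTheory Filter

/-- `I(α) = ∫₀^α (√α/√(α−s)) (1+s²)^{-5/4} ds`. -/
noncomputable def Ifun (α : ℝ) : ℝ :=
  ∫ s in (0:ℝ)..α, (Real.sqrt α / Real.sqrt (α - s)) * (1 + s ^ 2) ^ (-(5:ℝ)/4)

/-- `J(α) = ∫₀^α (√α/√(α−s)) · s (1+s²)^{-5/4} ds`. -/
noncomputable def Jfun (α : ℝ) : ℝ :=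
  ∫ s in (0:ℝ)..α, (Real.sqrt α / Real.sqrt (α - s)) * (s * (1 + s ^ 2) ^ (-(5:ℝ)/4))

/-- `c₀ = ∫_ℝ (1+t²)^{-5/4} dt`. -/
noncomputable def c₀ : ℝ := ∫ t : ℝ, (1 + t ^ 2) ^ (-(5:ℝ)/4)

open Set Topology

noncomputable def abelKernel (α s : ℝ) : ℝ := √α / √(α - s)

lemma abelKernel_nonneg (α s : ℝ) : 0 ≤ abelKernel α s := by
  unfold abelKernel; positivity

lemma measurable_abelKernel (α : ℝ) : Measurable (abelKernel α) := by
  unfold abelKernel; fun_prop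

lemma abelKernel_le_sqrt_two {α s : ℝ} (hα : 0 < α) (hs : s ≤ α / 2) :
    abelKernel α s ≤ √2 := by
  have hpos : 0 < √(α - s) := Real.sqrt_pos.mpr (by linarith)
  calc abelKernel α s = √2 * √(α / 2) / √(α - s) := by
        rw [abelKernel, ← Real.sqrt_mul zero_le_two]; ring_nf
    _ ≤ √2 * √(α - s) / √(α - s) := by gcongr; linarith
    _ = √2 := by field_simp

lemma tendsto_abelKernel_atTop (s : ℝ) : Tendsto (fun α => abelKernel α s) atTop (𝓝 1) := by
  have h : Tendsto (fun α : ℝ => (√(1 - s / α))⁻¹) atTop (𝓝 1) := by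
    simpa using ((tendsto_const_nhds.sub (tendsto_const_nhds.div_atTop tendsto_id)).sqrt).inv₀
      (by simp : √(1 - 0 : ℝ) ≠ 0)
  refine h.congr' ?_
  filter_upwards [eventually_gt_atTop 0] with α hα
  rw [abelKernel, one_sub_div hα.ne', Real.sqrt_div' _ hα.le, inv_div]

lemma abelKernel_eq_rpow {α s : ℝ} (hs : s ≤ α) :
    abelKernel α s = √α * (α - s) ^ (-(1:ℝ)/2) := by
  rw [abelKernel, div_eq_mul_inv, Real.sqrt_eq_rpow (α - s), ← Real.rpow_neg (by linarith)]
  ring_nf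

lemma intervalIntegrable_abelKernel {α a : ℝ} (ha : a ≤ α) :
    IntervalIntegrable (abelKernel α) volume a α := by
  have h := (intervalIntegral.intervalIntegrable_rpow' (r := -(1:ℝ)/2) (a := α - a) (b := 0)
    (by norm_num)).comp_sub_left α
  rw [sub_sub_cancel, sub_zero] at h
  refine (h.const_mul √α).congr fun s hs => (abelKernel_eq_rpow ?_).symm
  rw [uIoc_of_le ha] at hs
  exact hs.2

lemma integral_abelKernel {α a : ℝ} (ha : a ≤ α) :
    ∫ s in a..α, abelKernel α s = 2 * √α * √(α - a) := by
  rw [intervalIntegral.integral_congr (g := fun s => √α * (α - s) ^ (-(1:ℝ)/2))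
      fun s hs => abelKernel_eq_rpow (by rw [uIcc_of_le ha] at hs; exact hs.2),
    intervalIntegral.integral_const_mul,
    intervalIntegral.integral_comp_sub_left (fun x : ℝ => x ^ (-(1:ℝ)/2)) α, sub_self,
    integral_rpow (Or.inl (by norm_num)), Real.zero_rpow (by norm_num),
    Real.sqrt_eq_rpow (α - a)]
  norm_num
  ring

section Convergence

variable {g : ℝ → ℝ}

lemma tendsto_integral_abelKernel_mul_head (hg : IntegrableOn g (Ioi 0)) :
    Tendsto (fun α => ∫ s in 0..α / 2, abelKernel α s * g s) atTop
      (𝓝 (∫ s in Ioi 0, g s)) := by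
  have hlim : Tendsto (fun α => ∫ s in Ioi 0, (Ioc 0 (α / 2)).indicator
      (fun s => abelKernel α s * g s) s) atTop (𝓝 (∫ s in Ioi 0, g s)) := by
    refine tendsto_integral_filter_of_dominated_convergence (fun s => √2 * |g s|)
      (Eventually.of_forall fun α => ?_) ?_ (hg.norm.const_mul _) ?_
    · exact ((measurable_abelKernel α).aestronglyMeasurable.mul
        hg.aestronglyMeasurable).indicator measurableSet_Ioc
    · filter_upwards [eventually_gt_atTop 0] with α hα
      refine Eventually.of_forall fun s => ?_
      by_cases hs : s ∈ Ioc 0 (α / 2)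
      · rw [indicator_of_mem hs, norm_mul, Real.norm_of_nonneg (abelKernel_nonneg α s),
          Real.norm_eq_abs]
        exact mul_le_mul_of_nonneg_right (abelKernel_le_sqrt_two hα hs.2) (abs_nonneg _)
      · rw [indicator_of_notMem hs, norm_zero]
        positivity
    · filter_upwards [ae_restrict_mem measurableSet_Ioi] with s hs
      have h := (tendsto_abelKernel_atTop s).mul_const (g s)
      rw [one_mul] at h
      refine h.congr' ?_
      filter_upwards [eventually_ge_atTop (2 * s)] with α hα
      rw [indicator_of_mem (show s ∈ Ioc 0 (α / 2) from ⟨hs, by linarith⟩)]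
  refine hlim.congr' ?_
  filter_upwards [eventually_gt_atTop 0] with α hα
  rw [intervalIntegral.integral_of_le (by linarith), setIntegral_indicator measurableSet_Ioc,
    inter_eq_self_of_subset_right Ioc_subset_Ioi_self]

lemma eventually_abs_le_on_Icc_half (hdecay : Tendsto (fun s => s * g s) atTop (𝓝 0))
    {δ : ℝ} (hδ : 0 < δ) :
    ∀ᶠ α in atTop, 0 < α ∧ ∀ s ∈ Icc (α / 2) α, |g s| ≤ 2 * δ / α := by
  obtain ⟨s₀, hs₀⟩ := eventually_atTop.1 (NormedAddGroup.tendsto_nhds_zero.1 hdecay δ hδ)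
  filter_upwards [eventually_ge_atTop (2 * s₀), eventually_gt_atTop 0] with α hαs₀ hα
  refine ⟨hα, fun s hs => ?_⟩
  have hs0 : 0 < s := by linarith [hs.1]
  have h := (hs₀ s (by linarith [hs.1])).le
  rw [norm_mul, Real.norm_of_nonneg hs0.le, Real.norm_eq_abs] at h
  rw [le_div_iff₀ hα]
  nlinarith [hs.1, abs_nonneg (g s)]

lemma intervalIntegrable_abelKernel_mul_head (hg : IntegrableOn g (Ioi 0)) {α : ℝ}
    (hα : 0 < α) :
    IntervalIntegrable (fun s => abelKernel α s * g s) volume 0 (α / 2) := by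
  rw [intervalIntegrable_iff_integrableOn_Ioc_of_le (by linarith)]
  refine Integrable.mono' ((hg.mono_set Ioc_subset_Ioi_self).norm.const_mul √2)
    ((measurable_abelKernel α).aestronglyMeasurable.mul
      (hg.mono_set Ioc_subset_Ioi_self).aestronglyMeasurable) ?_
  filter_upwards [ae_restrict_mem measurableSet_Ioc] with s hs
  rw [norm_mul, Real.norm_of_nonneg (abelKernel_nonneg α s)]
  exact mul_le_mul_of_nonneg_right (abelKernel_le_sqrt_two hα hs.2) (norm_nonneg _)

lemma intervalIntegrable_abelKernel_mul_tail (hg : IntegrableOn g (Ioi 0)) {α M : ℝ}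
    (hα : 0 < α) (hM : ∀ s ∈ Icc (α / 2) α, |g s| ≤ M) :
    IntervalIntegrable (fun s => abelKernel α s * g s) volume (α / 2) α := by
  have hsub : Ioc (α / 2) α ⊆ Ioi 0 := Ioc_subset_Ioi_self.trans (Ioi_subset_Ioi (by linarith))
  have hK := (intervalIntegrable_abelKernel (α := α) (a := α / 2) (by linarith)).const_mul M
  rw [intervalIntegrable_iff_integrableOn_Ioc_of_le (by linarith : α / 2 ≤ α)] at hK ⊢
  refine Integrable.mono' hK ((measurable_abelKernel α).aestronglyMeasurable.mul
    (hg.mono_set hsub).aestronglyMeasurable) ?_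
  filter_upwards [ae_restrict_mem measurableSet_Ioc] with s hs
  rw [norm_mul, Real.norm_of_nonneg (abelKernel_nonneg α s), mul_comm M]
  exact mul_le_mul_of_nonneg_left (hM s (Ioc_subset_Icc_self hs)) (abelKernel_nonneg α s)

lemma tendsto_integral_abelKernel_mul_tail (hdecay : Tendsto (fun s => s * g s) atTop (𝓝 0)) :
    Tendsto (fun α => ∫ s in α / 2..α, abelKernel α s * g s) atTop (𝓝 0) := by
  refine NormedAddGroup.tendsto_nhds_zero.2 fun ε hε => ?_
  filter_upwards [eventually_abs_le_on_Icc_half hdecay (δ := ε / 8) (by positivity)]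
    with α ⟨hα, hbound⟩
  calc ‖∫ s in α / 2..α, abelKernel α s * g s‖
      ≤ ∫ s in α / 2..α, 2 * (ε / 8) / α * abelKernel α s := by
        refine intervalIntegral.norm_integral_le_of_norm_le (by linarith)
          (Eventually.of_forall fun s hs => ?_)
          ((intervalIntegrable_abelKernel (by linarith)).const_mul _)
        rw [norm_mul, Real.norm_of_nonneg (abelKernel_nonneg α s), mul_comm, Real.norm_eq_abs]
        exact mul_le_mul_of_nonneg_right (hbound s (Ioc_subset_Icc_self hs))
          (abelKernel_nonneg α s)
    _ = ε / (2 * α) * (√α * √(α / 2)) := by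
        rw [intervalIntegral.integral_const_mul, integral_abelKernel (by linarith),
          show α - α / 2 = α / 2 by ring]
        ring
    _ ≤ ε / (2 * α) * (√α * √α) := by gcongr; linarith
    _ < ε := by rw [Real.mul_self_sqrt hα.le]; field_simp; linarith

theorem tendsto_integral_abelKernel_mul (hg : IntegrableOn g (Ioi 0))
    (hdecay : Tendsto (fun s => s * g s) atTop (𝓝 0)) :
    Tendsto (fun α => ∫ s in 0..α, abelKernel α s * g s) atTop
      (𝓝 (∫ s in Ioi 0, g s)) := by
  have hlim := (tendsto_integral_abelKernel_mul_head hg).add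
    (tendsto_integral_abelKernel_mul_tail hdecay)
  rw [add_zero] at hlim
  refine hlim.congr' ?_
  filter_upwards [eventually_abs_le_on_Icc_half hdecay one_pos] with α ⟨hα, hM⟩
  exact intervalIntegral.integral_add_adjacent_intervals
    (intervalIntegrable_abelKernel_mul_head hg hα)
    (intervalIntegrable_abelKernel_mul_tail hg hα hM)

end Convergence

lemma integrable_one_add_sq_rpow : Integrable (fun t : ℝ => (1 + t ^ 2) ^ (-(5:ℝ)/4)) := by
  have h := integrable_rpow_neg_one_add_norm_sq (E := ℝ) (μ := volume) (r := 5 / 2) (by norm_num)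
  convert h using 3 with t
  · rw [Real.norm_eq_abs, sq_abs]
  · norm_num

lemma setIntegral_Ioi_one_add_sq_rpow : ∫ s in Ioi 0, (1 + s ^ 2) ^ (-(5:ℝ)/4) = c₀ / 2 := by
  have h := integral_comp_abs (f := fun t : ℝ => (1 + t ^ 2) ^ (-(5:ℝ)/4))
  simp only [sq_abs] at h
  rw [c₀, h]
  ring

lemma tendsto_one_add_sq_rpow_atTop {r : ℝ} (hr : r < 0) :
    Tendsto (fun s : ℝ => (1 + s ^ 2) ^ r) atTop (𝓝 0) := by
  have h := (tendsto_rpow_neg_atTop (neg_pos.2 hr)).comp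
    (tendsto_atTop_add_const_left _ 1 (tendsto_pow_atTop two_ne_zero))
  simpa only [neg_neg, Function.comp_def] using h

lemma sq_mul_one_add_sq_rpow_le (s : ℝ) :
    s ^ 2 * (1 + s ^ 2) ^ (-(5:ℝ)/4) ≤ (1 + s ^ 2) ^ (-(1:ℝ)/4) := by
  have hpos : 0 < 1 + s ^ 2 := by positivity
  calc s ^ 2 * (1 + s ^ 2) ^ (-(5:ℝ)/4) ≤ (1 + s ^ 2) * (1 + s ^ 2) ^ (-(5:ℝ)/4) := by
        gcongr; linarith
    _ = (1 + s ^ 2) ^ (-(1:ℝ)/4) := by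
        rw [← Real.rpow_one_add' hpos.le (by norm_num)]; norm_num

lemma tendsto_sq_mul_one_add_sq_rpow :
    Tendsto (fun s : ℝ => s * (s * (1 + s ^ 2) ^ (-(5:ℝ)/4))) atTop (𝓝 0) := by
  simp only [← mul_assoc, ← sq]
  exact squeeze_zero (fun s => by positivity) sq_mul_one_add_sq_rpow_le
    (tendsto_one_add_sq_rpow_atTop (by norm_num))

lemma mul_one_add_sq_rpow_nonneg {s : ℝ} (hs : s ∈ Ioi 0) :
    0 ≤ s * (1 + s ^ 2) ^ (-(5:ℝ)/4) :=
  mul_nonneg (le_of_lt hs) (by positivity)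

lemma tendsto_mul_one_add_sq_rpow :
    Tendsto (fun s : ℝ => s * (1 + s ^ 2) ^ (-(5:ℝ)/4)) atTop (𝓝 0) := by
  refine squeeze_zero' ?_ ?_ tendsto_sq_mul_one_add_sq_rpow
  · filter_upwards [eventually_gt_atTop 0] with s hs
    exact mul_one_add_sq_rpow_nonneg hs
  · filter_upwards [eventually_ge_atTop 1] with s hs
    rw [← mul_assoc]
    gcongr
    nlinarith

lemma hasDerivAt_neg_two_mul_one_add_sq_rpow (x : ℝ) :
    HasDerivAt (fun s : ℝ => -2 * (1 + s ^ 2) ^ (-(1:ℝ)/4))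
      (x * (1 + x ^ 2) ^ (-(5:ℝ)/4)) x := by
  have h := (((hasDerivAt_pow 2 x).const_add 1).rpow_const (p := -(1:ℝ)/4)
    (Or.inl (by positivity))).const_mul (-2)
  refine h.congr_deriv ?_
  rw [show -(1:ℝ)/4 - 1 = -(5:ℝ)/4 by norm_num]
  push_cast
  ring

lemma tendsto_neg_two_mul_one_add_sq_rpow :
    Tendsto (fun s : ℝ => -2 * (1 + s ^ 2) ^ (-(1:ℝ)/4)) atTop (𝓝 0) := by
  simpa using (tendsto_one_add_sq_rpow_atTop (by norm_num : -(1:ℝ)/4 < 0)).const_mul (-2)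

lemma integrableOn_mul_one_add_sq_rpow :
    IntegrableOn (fun s : ℝ => s * (1 + s ^ 2) ^ (-(5:ℝ)/4)) (Ioi 0) :=
  integrableOn_Ioi_deriv_of_nonneg
    (hasDerivAt_neg_two_mul_one_add_sq_rpow 0).continuousAt.continuousWithinAt
    (fun x _ => hasDerivAt_neg_two_mul_one_add_sq_rpow x) (fun _ => mul_one_add_sq_rpow_nonneg)
    tendsto_neg_two_mul_one_add_sq_rpow

lemma integral_Ioi_mul_one_add_sq_rpow :
    ∫ s in Ioi (0:ℝ), s * (1 + s ^ 2) ^ (-(5:ℝ)/4) = 2 := by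
  rw [integral_Ioi_of_hasDerivAt_of_nonneg
    (hasDerivAt_neg_two_mul_one_add_sq_rpow 0).continuousAt.continuousWithinAt
    (fun x _ => hasDerivAt_neg_two_mul_one_add_sq_rpow x) (fun _ => mul_one_add_sq_rpow_nonneg)
    tendsto_neg_two_mul_one_add_sq_rpow]
  norm_num

/-- `I(α) → c₀/2` and `J(α) → 2` as `α → ∞`. -/
theorem stmt_12 :
    Tendsto Ifun atTop (nhds (c₀ / 2)) ∧ Tendsto Jfun atTop (nhds 2) := by
  constructor
  · rw [← setIntegral_Ioi_one_add_sq_rpow]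
    exact tendsto_integral_abelKernel_mul integrable_one_add_sq_rpow.integrableOn
      tendsto_mul_one_add_sq_rpow
  · rw [← integral_Ioi_mul_one_add_sq_rpow]
    exact tendsto_integral_abelKernel_mul integrableOn_mul_one_add_sq_rpow
      tendsto_sq_mul_one_add_sq_rpow
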